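/- For all real numbers t and s, the almost complex structure J on 𝔫_{t,s} is integrable: N_J(x,y) = 0 for all x, y ∈ 𝔫_{t,s}. -/

import Mathlib

/-!
For an almost complex structure `J`, the Nijenhuis tensor is skew and satisfies
`N(Jx, y) = N(x, Jy) = -J N(x, y)`. Hence it vanishes as soon as it vanishes on pairs from a set
`S` with `S ∪ J S` spanning. For `𝔫_{t,s}` take `S = {e₁, e₃, e₅}`; since `N(x, x) = 0`, only
`N(e₁, e₃) = 2s e₅ + 2s Je₆ = 0`, `N(e₁, e₅) = 0` and `N(e₃, e₅) = 0` need computing.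
-/

namespace LieAlgebra

variable {R L : Type*} [CommRing R] [LieRing L] [LieAlgebra R L]

def nijenhuis (J : L →ₗ[R] L) : L →ₗ[R] L →ₗ[R] L :=
  LinearMap.mk₂ R (fun x y => ⁅J x, J y⁆ - ⁅x, y⁆ - J ⁅J x, y⁆ - J ⁅x, J y⁆)
    (fun a b c => by simp only [map_add, add_lie]; abel)
    (fun c a b => by simp only [map_smul, smul_lie, smul_sub])
    (fun a b c => by simp only [map_add, lie_add]; abel)
    (fun c a b => by simp only [map_smul, lie_smul, smul_sub])

variable (J : L →ₗ[R] L)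

theorem nijenhuis_apply (x y : L) :
    nijenhuis J x y = ⁅J x, J y⁆ - ⁅x, y⁆ - J ⁅J x, y⁆ - J ⁅x, J y⁆ :=
  rfl

theorem nijenhuis_swap (x y : L) : nijenhuis J y x = -nijenhuis J x y := by
  rw [nijenhuis_apply, nijenhuis_apply, ← lie_skew (J y) (J x), ← lie_skew y x,
    ← lie_skew (J y) x, ← lie_skew y (J x), map_neg, map_neg]
  abel

theorem nijenhuis_self (x : L) : nijenhuis J x x = 0 := by
  rw [nijenhuis_apply, lie_self, lie_self, ← lie_skew x (J x), map_neg]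
  abel

variable {J}

theorem nijenhuis_apply_left (hJ : ∀ x, J (J x) = -x) (x y : L) :
    nijenhuis J (J x) y = -J (nijenhuis J x y) := by
  simp only [nijenhuis_apply, hJ, neg_lie, map_sub, map_neg]
  abel

theorem nijenhuis_apply_right (hJ : ∀ x, J (J x) = -x) (x y : L) :
    nijenhuis J x (J y) = -J (nijenhuis J x y) := by
  rw [nijenhuis_swap J (J y) x, nijenhuis_apply_left hJ, nijenhuis_swap J x y, map_neg, neg_neg]

theorem nijenhuis_eq_zero_of_span_union_image (hJ : ∀ x, J (J x) = -x) {S : Set L}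
    (hS : Submodule.span R (S ∪ J '' S) = ⊤) (hN : ∀ x ∈ S, ∀ y ∈ S, nijenhuis J x y = 0) :
    nijenhuis J = 0 := by
  have hker : ∀ f : L →ₗ[R] L, (∀ x ∈ S, f x = 0 ∧ f (J x) = 0) → f = 0 := fun f hf =>
    LinearMap.ext_on hS (g := 0) <| by
      rintro _ (hx | ⟨x, hx, rfl⟩)
      exacts [(hf _ hx).1, (hf x hx).2]
  have hright : ∀ x ∈ S, nijenhuis J x = 0 := fun x hx =>
    hker _ fun y hy => ⟨hN x hx y hy, by rw [nijenhuis_apply_right hJ, hN x hx y hy, map_zero,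
      neg_zero]⟩
  refine LinearMap.ext_on hS (g := 0) ?_
  rintro _ (hx | ⟨x, hx, rfl⟩)
  · exact hright _ hx
  · ext y
    rw [nijenhuis_apply_left hJ, hright x hx]
    simp

end LieAlgebra

open LieAlgebra

theorem nts_J_integrable (s : ℝ)
    (L : Type) [LieRing L] [LieAlgebra ℝ L] (e : Module.Basis (Fin 6) ℝ L)
    (h02 : ⁅e 0, e 2⁆ = (-s) • e 4) (h13 : ⁅e 1, e 3⁆ = s • e 4)
    (h03 : ⁅e 0, e 3⁆ = (-s) • e 5) (h12 : ⁅e 1, e 2⁆ = (-s) • e 5)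
    (h04 : ⁅e 0, e 4⁆ = 0) (h05 : ⁅e 0, e 5⁆ = 0)
    (h14 : ⁅e 1, e 4⁆ = 0) (h15 : ⁅e 1, e 5⁆ = 0)
    (h24 : ⁅e 2, e 4⁆ = 0) (h25 : ⁅e 2, e 5⁆ = 0)
    (h34 : ⁅e 3, e 4⁆ = 0) (h35 : ⁅e 3, e 5⁆ = 0)
    (J : L →ₗ[ℝ] L)
    (hJ0 : J (e 0) = e 1) (hJ1 : J (e 1) = -e 0)
    (hJ2 : J (e 2) = e 3) (hJ3 : J (e 3) = -e 2)
    (hJ4 : J (e 4) = e 5) (hJ5 : J (e 5) = -e 4) :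
    ∀ x y : L, ⁅J x, J y⁆ - ⁅x, y⁆ - J ⁅J x, y⁆ - J ⁅x, J y⁆ = 0 := by
  have hJJ : ∀ x, J (J x) = -x := by
    have : J ∘ₗ J = -LinearMap.id := e.ext fun i => by
      fin_cases i <;> simp [hJ0, hJ1, hJ2, hJ3, hJ4, hJ5]
    exact fun x => by simpa using LinearMap.congr_fun this x
  have hspan : Submodule.span ℝ ({e 0, e 2, e 4} ∪ J '' {e 0, e 2, e 4}) = ⊤ := by
    refine eq_top_iff.2 (e.span_eq ▸ Submodule.span_mono ?_)
    rintro _ ⟨i, rfl⟩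
    fin_cases i <;> simp [hJ0, hJ2, hJ4]
  have h02' : nijenhuis J (e 0) (e 2) = 0 := by
    simp only [nijenhuis_apply, hJ0, hJ2, h13, h02, h12, h03, map_smul, hJ5]
    module
  have h04' : nijenhuis J (e 0) (e 4) = 0 := by
    simp [nijenhuis_apply, hJ0, hJ4, h15, h04, h14, h05]
  have h24' : nijenhuis J (e 2) (e 4) = 0 := by
    simp [nijenhuis_apply, hJ2, hJ4, h35, h24, h34, h25]
  have hN := nijenhuis_eq_zero_of_span_union_image hJJ hspan <| by
    simp only [Set.mem_insert_iff, Set.mem_singleton_iff]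
    rintro x (rfl | rfl | rfl) y (rfl | rfl | rfl) <;>
      first
      | exact nijenhuis_self J _
      | assumption
      | rw [nijenhuis_swap, neg_eq_zero]; assumption
  exact fun x y => congr($hN x y)
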